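/- Let f : ℝ → ℝ be defined by f(x) = ∑_{m=0}^∞ x^{2m} / (m! · (m+1)!). Then for every real number λ > 2, ∫_0^∞ e^{-λx} f(x) dx = λ·(1 − √(1 − 4·λ^{-2}))/2. -/

import Mathlib

/-!
Expanding `f` and integrating term by term against `e^{-λx}` gives
`∑ₘ (2m)!/(m!(m+1)!) λ^{-2m-1} = λ⁻¹ C(λ⁻²)`, where `C(t) = ∑ Cₘ tᵐ` is the generating function of
the Catalan numbers `Cₘ = (2m)!/(m!(m+1)!) ≤ 4ᵐ`, convergent for `|t| < 1/4`. The Catalan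
recursion gives `t C(t)² = C(t) - 1`, so `1 - 2tC(t)` is a square root of `1 - 4t`. It is
continuous on `[0, t]`, where `1 - 4s` never vanishes, and equals `1` at `0`, so it is the
positive root `√(1 - 4t)`.
-/

open Real MeasureTheory Set
open scoped Nat

lemma catalan_eq_factorial_div (n : ℕ) :
    (catalan n : ℝ) = (2 * n)! / (n ! * (n + 1)!) := by
  have hcentral : (n + 1) * catalan n * n ! * n ! = (2 * n)! := by
    have := Nat.choose_mul_factorial_mul_factorial (Nat.le_add_right n n)
    rwa [Nat.add_sub_cancel, ← two_mul, ← Nat.centralBinom_eq_two_mul_choose,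
      ← succ_mul_catalan_eq_centralBinom] at this
  rw [eq_div_iff (by positivity), ← hcentral, Nat.factorial_succ]
  push_cast
  ring

lemma catalan_le_four_pow (n : ℕ) : catalan n ≤ 4 ^ n :=
  calc catalan n ≤ (n + 1) * catalan n := Nat.le_mul_of_pos_left _ n.succ_pos
    _ = n.centralBinom := succ_mul_catalan_eq_centralBinom n
    _ ≤ 4 ^ n := Nat.centralBinom_le_four_pow n

noncomputable def catalanGF (t : ℝ) : ℝ := ∑' n, (catalan n : ℝ) * t ^ n

lemma norm_catalan_mul_pow_le (n : ℕ) {s r : ℝ} (hs : |s| ≤ r) :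
    ‖(catalan n : ℝ) * s ^ n‖ ≤ (4 * r) ^ n := by
  rw [norm_mul, norm_pow, Real.norm_natCast, Real.norm_eq_abs, mul_pow]
  gcongr
  exact_mod_cast catalan_le_four_pow n

lemma summable_norm_catalan_mul_pow {t : ℝ} (ht : |t| < 1 / 4) :
    Summable fun n ↦ ‖(catalan n : ℝ) * t ^ n‖ :=
  .of_nonneg_of_le (fun _ ↦ norm_nonneg _) (fun n ↦ norm_catalan_mul_pow_le n le_rfl)
    (summable_geometric_of_lt_one (by positivity) (by linarith))

lemma continuousOn_catalanGF {r : ℝ} (hr : |r| < 1 / 4) :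
    ContinuousOn catalanGF (Icc (-r) r) :=
  continuousOn_tsum (fun n ↦ by fun_prop)
    (summable_geometric_of_lt_one (by positivity) (by linarith))
    (fun n s hs ↦ norm_catalan_mul_pow_le n ((abs_le.mpr hs).trans (le_abs_self r)))

open Finset in
lemma mul_catalanGF_sq {t : ℝ} (ht : |t| < 1 / 4) :
    t * catalanGF t ^ 2 = catalanGF t - 1 := by
  have hs := summable_norm_catalan_mul_pow ht
  have hconv : ∀ n, ∑ kl ∈ antidiagonal n,
      (catalan kl.1 : ℝ) * t ^ kl.1 * ((catalan kl.2 : ℝ) * t ^ kl.2)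
        = catalan (n + 1) * t ^ n := by
    intro n
    rw [catalan_succ', Nat.cast_sum, sum_mul]
    refine sum_congr rfl fun kl hkl ↦ ?_
    rw [← mem_antidiagonal.mp hkl, pow_add]
    push_cast
    ring
  calc t * catalanGF t ^ 2 = ∑' n, (catalan (n + 1) : ℝ) * t ^ (n + 1) := by
        rw [catalanGF, sq, tsum_mul_tsum_eq_tsum_sum_antidiagonal_of_summable_norm hs hs,
          ← tsum_mul_left]
        exact tsum_congr fun n ↦ by rw [hconv, pow_succ]; ring
    _ = catalanGF t - 1 := by
        rw [catalanGF, (Summable.of_norm hs).tsum_eq_zero_add]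
        simp [catalan_zero]

lemma sqrt_one_sub_four_mul {t : ℝ} (h0 : 0 ≤ t) (ht : t < 1 / 4) :
    √(1 - 4 * t) = 1 - 2 * t * catalanGF t := by
  have hS : ∀ s ∈ Icc 0 t, |s| < 1 / 4 := fun s hs ↦ by
    rw [abs_of_nonneg hs.1]
    linarith [hs.2]
  have hcont : ContinuousOn (fun s ↦ 1 - 2 * s * catalanGF s) (Icc 0 t) :=
    continuousOn_const.sub <| (continuousOn_const.mul continuousOn_id).mul <|
      (continuousOn_catalanGF (hS t ⟨h0, le_rfl⟩)).mono (Icc_subset_Icc (by linarith) le_rfl)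
  have hsq : EqOn ((fun s ↦ 1 - 2 * s * catalanGF s) ^ 2) ((fun s ↦ √(1 - 4 * s)) ^ 2)
      (Icc 0 t) := fun s hs ↦ by
    simp only [Pi.pow_apply]
    rw [sq_sqrt (by linarith [hs.2])]
    linear_combination 4 * s * mul_catalanGF_sq (hS s hs)
  rcases isPreconnected_Icc.eq_or_eq_neg_of_sq_eq hcont (by fun_prop) hsq
    (fun hs ↦ (sqrt_pos.mpr (by linarith [hs.2])).ne') with h | h
  · exact (h ⟨h0, le_rfl⟩).symm
  · have h_at_zero := h ⟨le_rfl, h0⟩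
    norm_num at h_at_zero

lemma integrableOn_pow_mul_exp_neg_mul (n : ℕ) {r : ℝ} (hr : 0 < r) :
    IntegrableOn (fun x ↦ x ^ n * exp (-r * x)) (Ioi 0) := by
  have hn : (-1 : ℝ) < n := neg_one_lt_zero.trans_le n.cast_nonneg
  refine (integrableOn_rpow_mul_exp_neg_mul_rpow hn one_pos hr).congr_fun (fun x _ ↦ ?_)
    measurableSet_Ioi
  simp only [rpow_one, rpow_natCast]

lemma integral_pow_mul_exp_neg_mul (n : ℕ) {r : ℝ} (hr : 0 < r) :
    ∫ x in Ioi 0, x ^ n * exp (-r * x) = n ! / r ^ (n + 1) := by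
  have h := integral_rpow_mul_exp_neg_mul_Ioi (a := n + 1) (by positivity) hr
  simp only [add_sub_cancel_right, rpow_natCast, ← neg_mul] at h
  rw [h, Gamma_nat_eq_factorial, ← Nat.cast_succ, rpow_natCast, div_pow, one_pow,
    one_div_mul_eq_div]

lemma integral_exp_neg_mul_mul_tsum {a : ℕ → ℝ} {k : ℕ → ℕ} {r : ℝ} (hr : 0 < r)
    (hs : Summable fun m ↦ |a m| * (k m)! / r ^ (k m + 1)) :
    ∫ x in Ioi 0, exp (-r * x) * ∑' m, a m * x ^ k m = ∑' m, a m * (k m)! / r ^ (k m + 1) := by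
  set F : ℕ → ℝ → ℝ := fun m x ↦ a m * (x ^ k m * exp (-r * x))
  have hF : ∀ m, IntegrableOn (F m) (Ioi 0) :=
    fun m ↦ (integrableOn_pow_mul_exp_neg_mul (k m) hr).const_mul (a m)
  have hF_int : ∀ m, ∫ x in Ioi 0, F m x = a m * (k m)! / r ^ (k m + 1) := fun m ↦ by
    rw [integral_const_mul, integral_pow_mul_exp_neg_mul _ hr, mul_div_assoc]
  have hF_norm : ∀ m, ∫ x in Ioi 0, ‖F m x‖ = |a m| * (k m)! / r ^ (k m + 1) := fun m ↦ by
    rw [mul_div_assoc, ← integral_pow_mul_exp_neg_mul _ hr, ← integral_const_mul]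
    refine setIntegral_congr_fun measurableSet_Ioi fun x hx ↦ ?_
    have hx0 : 0 < x := hx
    rw [norm_mul, Real.norm_eq_abs, Real.norm_of_nonneg (by positivity)]
  calc ∫ x in Ioi 0, exp (-r * x) * ∑' m, a m * x ^ k m = ∫ x in Ioi 0, ∑' m, F m x := by
        congr! 2 with x
        rw [← tsum_mul_left]
        exact tsum_congr fun m ↦ by ring
    _ = ∑' m, a m * (k m)! / r ^ (k m + 1) := by
        rw [← integral_tsum_of_summable_integral_norm hF (by simpa only [hF_norm] using hs)]
        exact tsum_congr hF_int

/-- Explicit computation of the Laplace transform of `f(x) = ∑ x^{2m}/(m!(m+1)!)`: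
`∫_0^∞ e^{-λx} f(x) dx = λ(1 − √(1 − 4λ^{-2}))/2` for `λ > 2`. -/
theorem stmt_7 (f : ℝ → ℝ)
    (hf : ∀ x : ℝ, f x =
      ∑' m : ℕ, x ^ (2 * m) / ((Nat.factorial m : ℝ) * (Nat.factorial (m + 1) : ℝ)))
    (l : ℝ) (hl : 2 < l) :
    (∫ x in Set.Ioi (0:ℝ), Real.exp (-l * x) * f x) =
      l * (1 - Real.sqrt (1 - 4 * (1 / l) ^ 2)) / 2 := by
  have hl0 : 0 < l := by linarith
  have hq : |(1 / l) ^ 2| < 1 / 4 :=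
    calc |(1 / l) ^ 2| = (1 / l) ^ 2 := abs_of_nonneg (by positivity)
      _ < (1 / 2) ^ 2 := by gcongr
      _ = 1 / 4 := by norm_num
  set q := (1 / l) ^ 2 with hq_def
  have hterm : ∀ m : ℕ, 1 / ((m ! : ℝ) * (m + 1)!) * (2 * m)! / l ^ (2 * m + 1)
      = catalan m * q ^ m / l := fun m ↦ by
    rw [catalan_eq_factorial_div, ← pow_mul, one_div_pow, pow_succ]
    field_simp
  have hf' : f = fun x ↦ ∑' m : ℕ, 1 / ((m ! : ℝ) * (m + 1)!) * x ^ (2 * m) := by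
    ext x
    rw [hf x]
    exact tsum_congr fun m ↦ one_div_mul_eq_div _ _ |>.symm
  rw [hf', integral_exp_neg_mul_mul_tsum hl0, tsum_congr hterm, tsum_div_const, ← catalanGF,
    sqrt_one_sub_four_mul (by positivity) ((le_abs_self q).trans_lt hq)]
  · rw [hq_def]
    field_simp
    ring
  · refine ((summable_norm_catalan_mul_pow hq).of_norm.div_const l).congr fun m ↦ ?_
    rw [abs_of_nonneg (by positivity), hterm]
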